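/- Let (X,G) be a minimal dynamical system where X is a compact metric space with metric d compatible with its topology. Then the action (X,G) is locally quasi-analytic if and only if there exists an almost normal subgroup H of G such that X_H equals the set of points of X with trivial holonomy (equivalently: the stabilizers of all points without holonomy are conjugate to one another and are almost normal subgroups of G). -/

import Mathlib

/-- The conjugate subgroup `g H g⁻¹`. -/
def conjSubgroup {G : Type*} [Group G] (g : G) (H : Subgroup G) : Subgroup G :=
  Subgroup.map (MulAut.conj g).toMonoidHom H

/-- The set `X_H` of points of `X` whose stabilizer is conjugate to `H`. -/
def setXH (G : Type*) {X : Type*} [Group G] [MulAction G X] (H : Subgroup G) : Set X :=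
  {x : X | ∃ g : G, MulAction.stabilizer G x = conjSubgroup g H}

/-- A point `x` has trivial holonomy if every element of its stabilizer fixes pointwise
some open neighborhood of `x`. -/
def TrivialHolonomy (G : Type*) {X : Type*} [Group G] [TopologicalSpace X] [MulAction G X]
    (x : X) : Prop :=
  ∀ g ∈ MulAction.stabilizer G x, ∃ U : Set X, IsOpen U ∧ x ∈ U ∧ ∀ y ∈ U, g • y = y

/-- An action of `G` on a metric space `X` is locally quasi-analytic if there is `ε > 0` such
that for every open `U` of diameter `< ε`, every `g ∈ G` and every nonempty open `V ⊆ U`, if `g`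
fixes `V` pointwise then `g` fixes `U` pointwise. -/
def IsLocallyQuasiAnalytic (G X : Type*) [Group G] [MetricSpace X] [MulAction G X] : Prop :=
  ∃ ε : ℝ, 0 < ε ∧ ∀ U : Set X, IsOpen U → Metric.diam U < ε →
    ∀ g : G, ∀ V : Set X, V ⊆ U → V.Nonempty → IsOpen V →
      (∀ y ∈ V, g • y = y) → ∀ y ∈ U, g • y = y

/-!
If the action is locally quasi-analytic with constant `ε`, every element of the stabilizer of a
point `x` without holonomy fixes the whole ball of radius `ε / 3` around `x`, so nearby points
without holonomy have the same stabilizer. Take `H` to be the stabilizer of one such point `x₀`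
(they are dense by Baire). Minimality and compactness cover `X` by finitely many translates of the
ball around `x₀`, so `H` has finitely many conjugates; approximating a point by the orbit of `x₀`
identifies `X_H` with the points without holonomy, because a conjugate of an almost normal
subgroup is never properly contained in another one.

Conversely, the fixed-point sets of the finitely many conjugates of `H` are closed and contain the
dense set `X_H`, so they cover `X`. By Baire their interiors cover a dense open set, which is
`G`-invariant and hence all of `X` by minimality. A Lebesgue number of this cover is an LQA
constant: if `g` fixes an open `V` inside a small open `U ⊆ Fix K`, it fixes a point `x ∈ V`
without holonomy, whose stabilizer is a conjugate of `H` containing `K`, hence equal to `K`.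
-/

open MulAction Metric Set Subgroup
open scoped Pointwise

section Conjugates

variable {G : Type*} [Group G]

def conjugateSubgroups (H : Subgroup G) : Set (Subgroup G) :=
  range fun g : G => conjSubgroup g H

lemma conjSubgroup_one (H : Subgroup G) : conjSubgroup 1 H = H := by
  ext; simp [conjSubgroup]

lemma conjSubgroup_mul (a b : G) (H : Subgroup G) :
    conjSubgroup (a * b) H = conjSubgroup a (conjSubgroup b H) := by
  simp only [conjSubgroup, map_mul, Subgroup.map_map]
  rfl

lemma conjSubgroup_inv_conjSubgroup (a : G) (H : Subgroup G) :
    conjSubgroup a⁻¹ (conjSubgroup a H) = H := by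
  rw [← conjSubgroup_mul, inv_mul_cancel, conjSubgroup_one]

lemma mem_conjSubgroup {g x : G} {H : Subgroup G} : x ∈ conjSubgroup g H ↔ g⁻¹ * x * g ∈ H :=
  mem_map_equiv

lemma conjSubgroup_eq_self_iff {g : G} {H : Subgroup G} :
    conjSubgroup g H = H ↔ g ∈ normalizer (H : Set G) :=
  mem_normalizer_iff_map_conj_eq.symm

lemma conjSubgroup_eq_conjSubgroup_iff {a b : G} {H : Subgroup G} :
    conjSubgroup a H = conjSubgroup b H ↔ a⁻¹ * b ∈ normalizer (H : Set G) := by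
  rw [← conjSubgroup_eq_self_iff, conjSubgroup_mul]
  constructor
  · intro h
    rw [← h, conjSubgroup_inv_conjSubgroup]
  · intro h
    calc conjSubgroup a H = conjSubgroup a (conjSubgroup a⁻¹ (conjSubgroup b H)) := by rw [h]
      _ = conjSubgroup b H := by rw [← conjSubgroup_mul, mul_inv_cancel, conjSubgroup_one]

lemma conjSubgroup_mem_conjugateSubgroups (g : G) {H K : Subgroup G}
    (hK : K ∈ conjugateSubgroups H) : conjSubgroup g K ∈ conjugateSubgroups H := by
  obtain ⟨a, rfl⟩ := hK
  exact ⟨g * a, conjSubgroup_mul g a H⟩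

noncomputable def quotientNormalizerEquivConjugateSubgroups (H : Subgroup G) :
    G ⧸ normalizer (H : Set G) ≃ conjugateSubgroups H :=
  (Quotient.congrRight fun a b => by
      rw [QuotientGroup.leftRel_apply, Setoid.ker_def, conjSubgroup_eq_conjSubgroup_iff]).trans
    (Setoid.quotientKerEquivRange _)

lemma finiteIndex_normalizer_iff_finite_conjugateSubgroups (H : Subgroup G) :
    (normalizer (H : Set G)).FiniteIndex ↔ (conjugateSubgroups H).Finite := by
  rw [finiteIndex_iff_finite_quotient, ← finite_coe_iff]
  exact (quotientNormalizerEquivConjugateSubgroups H).finite_iff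

instance (H : Subgroup G) [(normalizer (H : Set G)).FiniteIndex] :
    Finite (conjugateSubgroups H) :=
  ((finiteIndex_normalizer_iff_finite_conjugateSubgroups H).1 inferInstance).to_subtype

variable {H : Subgroup G} [hN : (normalizer (H : Set G)).FiniteIndex]

lemma conjSubgroup_eq_self_of_le {c : G} (hle : conjSubgroup c H ≤ H) : conjSubgroup c H = H := by
  obtain ⟨n, hn, -, hcn⟩ := exists_pow_mem_of_index_ne_zero hN.index_ne_zero c
  have hanti : Antitone fun k : ℕ => conjSubgroup (c ^ k) H :=
    antitone_nat_of_succ_le fun k => by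
      simp only [pow_succ, conjSubgroup_mul]
      exact map_mono hle
  refine le_antisymm hle ?_
  calc H = conjSubgroup (c ^ n) H := (conjSubgroup_eq_self_iff.2 hcn).symm
    _ ≤ conjSubgroup (c ^ 1) H := hanti hn
    _ = conjSubgroup c H := by rw [pow_one]

lemma eq_of_le_of_mem_conjugateSubgroups {K L : Subgroup G} (hK : K ∈ conjugateSubgroups H)
    (hL : L ∈ conjugateSubgroups H) (hKL : K ≤ L) : K = L := by
  obtain ⟨a, rfl⟩ := hK
  obtain ⟨b, rfl⟩ := hL
  have hle : conjSubgroup (b⁻¹ * a) H ≤ H :=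
    calc conjSubgroup (b⁻¹ * a) H = conjSubgroup b⁻¹ (conjSubgroup a H) := conjSubgroup_mul ..
      _ ≤ conjSubgroup b⁻¹ (conjSubgroup b H) := map_mono hKL
      _ = H := conjSubgroup_inv_conjSubgroup b H
  exact (conjSubgroup_eq_conjSubgroup_iff.2
    (conjSubgroup_eq_self_iff.1 (conjSubgroup_eq_self_of_le hle))).symm

end Conjugates

section Holonomy

variable {G X : Type*} [Group G] [MulAction G X]

lemma stabilizer_smul_mem_conjugateSubgroups (a : G) (x : X) :
    stabilizer G (a • x) ∈ conjugateSubgroups (stabilizer G x) :=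
  ⟨a, (stabilizer_smul_eq_stabilizer_map_conj a x).symm⟩

lemma mem_setXH_iff {H : Subgroup G} {x : X} :
    x ∈ setXH G H ↔ stabilizer G x ∈ conjugateSubgroups H :=
  exists_congr fun _ => eq_comm

lemma mem_fixedPoints_subgroup_iff {K : Subgroup G} {x : X} :
    x ∈ fixedPoints K X ↔ ∀ g ∈ K, g • x = x :=
  Subtype.forall

lemma smul_fixedPoints_subgroup (a : G) (K : Subgroup G) :
    a • fixedPoints K X = fixedPoints (conjSubgroup a K) X := by
  ext x
  rw [mem_smul_set_iff_inv_smul_mem, mem_fixedPoints_subgroup_iff, mem_fixedPoints_subgroup_iff]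
  constructor
  · intro hx g hg
    simpa [mul_smul, inv_smul_eq_iff] using hx _ (mem_conjSubgroup.1 hg)
  · intro hx k hk
    have := hx (a * k * a⁻¹) (by simpa [mem_conjSubgroup, mul_assoc] using hk)
    simpa [mul_smul, smul_eq_iff_eq_inv_smul, eq_comm] using this

variable [TopologicalSpace X] [ContinuousConstSMul G X]

lemma TrivialHolonomy.smul {x : X} (hx : TrivialHolonomy G x) (a : G) :
    TrivialHolonomy G (a • x) := by
  intro g hg
  have hconj : a⁻¹ * g * a ∈ stabilizer G x := by
    simp [mul_smul, mem_stabilizer_iff.1 hg]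
  obtain ⟨U, hUo, hxU, hfix⟩ := hx _ hconj
  refine ⟨a • U, hUo.smul a, smul_mem_smul_set hxU, ?_⟩
  rintro _ ⟨u, hu, rfl⟩
  simpa [mul_smul, inv_smul_eq_iff] using hfix u hu

variable [T2Space X]

lemma isClosed_fixedBy (g : G) : IsClosed (fixedBy X g) :=
  isClosed_eq (continuous_const_smul g) continuous_id

lemma isClosed_fixedPoints_subgroup (K : Subgroup G) : IsClosed (fixedPoints K X) := by
  have : fixedPoints K X = ⋂ g ∈ K, fixedBy X g := by
    ext; simp
  rw [this]
  exact isClosed_biInter fun g _ => isClosed_fixedBy g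

variable (G) in
lemma dense_setOf_trivialHolonomy [Countable G] [BaireSpace X] :
    Dense {x : X | TrivialHolonomy G x} := by
  refine Dense.mono ?_ (dense_iInter_of_isOpen (f := fun g : G => (frontier (fixedBy X g))ᶜ)
    (fun _ => isClosed_frontier.isOpen_compl)
    fun g => interior_eq_empty_iff_dense_compl.1 (interior_frontier (isClosed_fixedBy g)))
  intro x hx g hg
  have hint : x ∈ interior (fixedBy X g) :=
    by_contra fun h => mem_iInter.1 hx g ⟨subset_closure hg, h⟩
  exact ⟨_, isOpen_interior, hint, fun y hy => mem_fixedBy.1 (interior_subset hy)⟩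

end Holonomy

section LocallyQuasiAnalytic

variable {G X : Type*} [Group G] [MulAction G X] [MetricSpace X]

variable (G X) in
def StabilizersFixBalls (r : ℝ) : Prop :=
  ∀ x : X, TrivialHolonomy G x → ∀ g ∈ stabilizer G x, ∀ y ∈ ball x r, g • y = y

lemma IsLocallyQuasiAnalytic.exists_stabilizersFixBalls (h : IsLocallyQuasiAnalytic G X) :
    ∃ r > 0, StabilizersFixBalls G X r := by
  obtain ⟨ε, hε, hlqa⟩ := h
  refine ⟨ε / 3, by positivity, fun x hx g hg y hy => ?_⟩
  obtain ⟨W, hWo, hxW, hWfix⟩ := hx g hg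
  have hdiam : diam (ball x (ε / 3)) < ε :=
    (diam_ball (by positivity)).trans_lt (by linarith)
  exact hlqa _ isOpen_ball hdiam g (W ∩ ball x (ε / 3)) inter_subset_right
    ⟨x, hxW, mem_ball_self (by positivity)⟩ (hWo.inter isOpen_ball) (fun z hz => hWfix z hz.1) y hy

variable {r : ℝ}

lemma stabilizer_le_of_dist_lt (hr : StabilizersFixBalls G X r) {x y : X}
    (hx : TrivialHolonomy G x) (hxy : dist x y < r) : stabilizer G x ≤ stabilizer G y :=
  fun g hg => hr x hx g hg y (mem_ball'.2 hxy)

lemma stabilizer_eq_of_dist_lt (hr : StabilizersFixBalls G X r) {x y : X}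
    (hx : TrivialHolonomy G x) (hy : TrivialHolonomy G y) (hxy : dist x y < r) :
    stabilizer G x = stabilizer G y :=
  le_antisymm (stabilizer_le_of_dist_lt hr hx hxy)
    (stabilizer_le_of_dist_lt hr hy (dist_comm x y ▸ hxy))

variable [ContinuousConstSMul G X] [IsMinimal G X]

lemma finite_conjugateSubgroups_stabilizer [CompactSpace X] (hr0 : 0 < r)
    (hr : StabilizersFixBalls G X r) {x₀ : X} (hx₀ : TrivialHolonomy G x₀) :
    (conjugateSubgroups (stabilizer G x₀)).Finite := by
  obtain ⟨I, hI⟩ := isCompact_univ.exists_finite_cover_smul G (isOpen_ball (x := x₀))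
    (nonempty_ball.2 hr0)
  refine (I.finite_toSet.image fun g => conjSubgroup g (stabilizer G x₀)).subset ?_
  rintro _ ⟨b, rfl⟩
  obtain ⟨g, hgI, hb⟩ : ∃ g ∈ I, b • x₀ ∈ g • ball x₀ r := by
    simpa using hI (mem_univ (b • x₀))
  have hclose : dist ((g⁻¹ * b) • x₀) x₀ < r := by
    rw [mul_smul]
    exact mem_ball.1 (mem_smul_set_iff_inv_smul_mem.1 hb)
  have heq := stabilizer_eq_of_dist_lt hr (hx₀.smul _) hx₀ hclose
  rw [stabilizer_smul_eq_stabilizer_map_conj] at heq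
  exact ⟨g, hgI, conjSubgroup_eq_conjSubgroup_iff.2 (conjSubgroup_eq_self_iff.1 heq)⟩

lemma setXH_stabilizer_eq (hr0 : 0 < r) (hr : StabilizersFixBalls G X r) {x₀ : X}
    (hx₀ : TrivialHolonomy G x₀) [(normalizer (stabilizer G x₀ : Set G)).FiniteIndex] :
    setXH G (stabilizer G x₀) = {x : X | TrivialHolonomy G x} := by
  ext y
  obtain ⟨b, hb⟩ := (isOpen_ball (x := y)).exists_smul_mem G x₀ (nonempty_ball.2 hr0)
  have hbx₀ : TrivialHolonomy G (b • x₀) := hx₀.smul b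
  have hby : dist (b • x₀) y < r := mem_ball.1 hb
  rw [mem_setXH_iff, mem_ofPred_eq]
  constructor
  · intro hy g hg
    have heq : stabilizer G (b • x₀) = stabilizer G y :=
      eq_of_le_of_mem_conjugateSubgroups (stabilizer_smul_mem_conjugateSubgroups b x₀) hy
        (stabilizer_le_of_dist_lt hr hbx₀ hby)
    exact ⟨ball (b • x₀) r, isOpen_ball, mem_ball'.2 hby, hr _ hbx₀ g (heq ▸ hg)⟩
  · intro hy
    rw [← stabilizer_eq_of_dist_lt hr hbx₀ hy hby]
    exact stabilizer_smul_mem_conjugateSubgroups b x₀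

end LocallyQuasiAnalytic

section Converse

variable {G X : Type*} [Group G] [MulAction G X] [TopologicalSpace X]

variable (G) in
lemma IsOpen.eq_univ_of_smul_subset [IsMinimal G X] {U : Set X} (hUo : IsOpen U)
    (hne : U.Nonempty) (hinv : ∀ g : G, g • U ⊆ U) : U = univ :=
  eq_univ_of_univ_subset <| (hUo.iUnion_smul G hne).symm.subset.trans (iUnion_subset hinv)

variable [ContinuousConstSMul G X] [T2Space X] [Countable G] [BaireSpace X] {H : Subgroup G}
  [(normalizer (H : Set G)).FiniteIndex]

lemma iUnion_fixedPoints_conjugateSubgroups_eq_univ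
    (hXH : setXH G H = {x : X | TrivialHolonomy G x}) :
    ⋃ K : conjugateSubgroups H, fixedPoints K X = univ := by
  refine eq_univ_of_univ_subset ?_
  rw [← (dense_setOf_trivialHolonomy G).closure_eq, ← hXH,
    (isClosed_iUnion_of_finite fun K => isClosed_fixedPoints_subgroup _).closure_subset_iff]
  intro x hx
  exact mem_iUnion.2 ⟨⟨_, mem_setXH_iff.1 hx⟩, mem_fixedPoints_subgroup_iff.2 fun g hg => hg⟩

lemma iUnion_interior_fixedPoints_conjugateSubgroups_eq_univ [IsMinimal G X] [Nonempty X]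
    (hXH : setXH G H = {x : X | TrivialHolonomy G x}) :
    ⋃ K : conjugateSubgroups H, interior (fixedPoints K X) = univ := by
  have hdense := dense_iUnion_interior_of_closed (fun K => isClosed_fixedPoints_subgroup _)
    (iUnion_fixedPoints_conjugateSubgroups_eq_univ hXH)
  refine (isOpen_iUnion fun _ => isOpen_interior).eq_univ_of_smul_subset G hdense.nonempty
    fun g => ?_
  rw [smul_set_iUnion]
  refine iUnion_subset fun K => ?_
  rw [← interior_smul, smul_fixedPoints_subgroup]
  exact subset_iUnion_of_subset ⟨_, conjSubgroup_mem_conjugateSubgroups g K.2⟩ subset_rfl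

end Converse

section Main

variable {G X : Type*} [Group G] [Countable G] [MetricSpace X] [CompactSpace X] [MulAction G X]
  [ContinuousConstSMul G X] [IsMinimal G X]

theorem IsLocallyQuasiAnalytic.exists_setXH_eq (h : IsLocallyQuasiAnalytic G X) :
    ∃ H : Subgroup G, (normalizer (H : Set G)).FiniteIndex ∧
      setXH G H = {x : X | TrivialHolonomy G x} := by
  cases isEmpty_or_nonempty X
  · refine ⟨⊥, ?_, Subsingleton.elim _ _⟩
    rw [normalizer_eq_top]
    infer_instance
  obtain ⟨r, hr0, hr⟩ := h.exists_stabilizersFixBalls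
  obtain ⟨x₀, hx₀⟩ := (dense_setOf_trivialHolonomy G (X := X)).nonempty
  have := (finiteIndex_normalizer_iff_finite_conjugateSubgroups _).2
    (finite_conjugateSubgroups_stabilizer hr0 hr hx₀)
  exact ⟨_, this, setXH_stabilizer_eq hr0 hr hx₀⟩

theorem isLocallyQuasiAnalytic_of_setXH_eq {H : Subgroup G}
    [(normalizer (H : Set G)).FiniteIndex] (hXH : setXH G H = {x : X | TrivialHolonomy G x}) :
    IsLocallyQuasiAnalytic G X := by
  cases isEmpty_or_nonempty X
  · exact ⟨1, one_pos, fun _ _ _ _ _ _ ⟨v, _⟩ => isEmptyElim v⟩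
  obtain ⟨δ, hδ, hleb⟩ := lebesgue_number_lemma_of_metric isCompact_univ
    (fun _ => isOpen_interior) (iUnion_interior_fixedPoints_conjugateSubgroups_eq_univ hXH).ge
  refine ⟨δ, hδ, fun U _ hUδ g V hVU ⟨v, hv⟩ hVo hgV => ?_⟩
  obtain ⟨K, hK⟩ := hleb v trivial
  have hUbdd : Bornology.IsBounded U := isCompact_univ.isBounded.subset (subset_univ U)
  have hUK : U ⊆ fixedPoints K X := fun u hu => interior_subset <| hK <| mem_ball.2 <|
    (dist_le_diam_of_mem hUbdd hu (hVU hv)).trans_lt hUδ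
  obtain ⟨x, hx, hxV⟩ := (dense_setOf_trivialHolonomy G).exists_mem_open hVo ⟨v, hv⟩
  have hKx : (K : Subgroup G) = stabilizer G x :=
    eq_of_le_of_mem_conjugateSubgroups K.2 (mem_setXH_iff.1 (hXH ▸ hx))
      (mem_fixedPoints_subgroup_iff.1 (hUK (hVU hxV)))
  exact fun y hy => mem_fixedPoints_subgroup_iff.1 (hUK hy) g (hKx ▸ hgV x hxV)

end Main

/-- Let `(X,G)` be a minimal dynamical system on a compact metric space. Then the action is
locally quasi-analytic if and only if there exists an almost normal subgroup `H` of `G` such that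
`X_H` is exactly the set of points with trivial holonomy. -/
theorem stmt6 {G X : Type*} [Group G] [Countable G]
    [MetricSpace X] [CompactSpace X]
    [MulAction G X] [ContinuousConstSMul G X]
    (hmin : ∀ x : X, Dense (MulAction.orbit G x)) :
    IsLocallyQuasiAnalytic G X ↔
      ∃ H : Subgroup G, (Subgroup.normalizer (H : Set G)).FiniteIndex ∧
        setXH G H = {x : X | TrivialHolonomy G x} := by
  have : IsMinimal G X := ⟨hmin⟩
  exact ⟨IsLocallyQuasiAnalytic.exists_setXH_eq,
    fun ⟨_, _, hXH⟩ => isLocallyQuasiAnalytic_of_setXH_eq hXH⟩
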